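/- Replacing partial derivatives by generalized derivatives D/∂zʲ := ∂/∂zʲ + ∂s/∂zʲ and D/∂z̄ʲ := ∂/∂z̄ʲ + ∂s/∂z̄ʲ in the complex Poisson bracket yields exactly the GSPB: 2i ∑_j (Df/∂z̄ʲ · DH/∂zʲ − Df/∂zʲ · DH/∂z̄ʲ) = {f,H}_PB + f·{s,H}_PB − H·{s,f}_PB, where the generalized derivative acts on a function f as Df/∂zʲ = ∂f/∂zʲ + f·∂s/∂zʲ. -/
import Mathlib


open Complex BigOperators

/-- Phase space `ℝ^n × ℝ^n` with coordinates `(q, p)`. -/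
abbrev Phase (n : ℕ) := (Fin n → ℝ) × (Fin n → ℝ)

/-- Partial derivative in the `qʲ` direction. -/
noncomputable def dq {n : ℕ} (f : Phase n → ℂ) (j : Fin n) (x : Phase n) : ℂ :=
  fderiv ℝ f x (Pi.single j 1, 0)

/-- Partial derivative in the `pʲ` direction. -/
noncomputable def dp {n : ℕ} (f : Phase n → ℂ) (j : Fin n) (x : Phase n) : ℂ :=
  fderiv ℝ f x (0, Pi.single j 1)

/-- Wirtinger derivative `∂f/∂zʲ = (1/2)(∂f/∂qʲ − i ∂f/∂pʲ)`. -/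
noncomputable def wz {n : ℕ} (f : Phase n → ℂ) (j : Fin n) (x : Phase n) : ℂ :=
  (1 / 2 : ℂ) * (dq f j x - Complex.I * dp f j x)

/-- Wirtinger derivative `∂f/∂z̄ʲ = (1/2)(∂f/∂qʲ + i ∂f/∂pʲ)`. -/
noncomputable def wzb {n : ℕ} (f : Phase n → ℂ) (j : Fin n) (x : Phase n) : ℂ :=
  (1 / 2 : ℂ) * (dq f j x + Complex.I * dp f j x)

/-- The complex-coordinate Poisson bracket
`{f,g}_PB = 2i ∑_j (∂f/∂z̄ʲ ∂g/∂zʲ − ∂f/∂zʲ ∂g/∂z̄ʲ)`. -/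
noncomputable def PBc {n : ℕ} (f g : Phase n → ℂ) (x : Phase n) : ℂ :=
  2 * Complex.I * ∑ j : Fin n, (wzb f j x * wz g j x - wz f j x * wzb g j x)

/-- A real-valued function viewed as a complex-valued one. -/
def cR {n : ℕ} (f : Phase n → ℝ) : Phase n → ℂ := fun x => (f x : ℂ)

/-- Generalized (structural) Wirtinger derivative `Df/∂zʲ = ∂f/∂zʲ + f ∂s/∂zʲ`. -/
noncomputable def Dz {n : ℕ} (s f : Phase n → ℂ) (j : Fin n) (x : Phase n) : ℂ :=
  wz f j x + f x * wz s j x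

/-- Generalized (structural) Wirtinger derivative `Df/∂z̄ʲ = ∂f/∂z̄ʲ + f ∂s/∂z̄ʲ`. -/
noncomputable def Dzb {n : ℕ} (s f : Phase n → ℂ) (j : Fin n) (x : Phase n) : ℂ :=
  wzb f j x + f x * wzb s j x

/-- The GSPB in complex coordinates:
`{f,g} = {f,g}_PB + f {s,g}_PB − g {s,f}_PB`. -/
noncomputable def GSPBc {n : ℕ} (s f g : Phase n → ℂ) (x : Phase n) : ℂ :=
  PBc f g x + f x * PBc s g x - g x * PBc s f x

/-- The `j`-th complex coordinate function `zʲ = qʲ + i pʲ`. -/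
noncomputable def zc {n : ℕ} (j : Fin n) : Phase n → ℂ :=
  fun x => (x.1 j : ℂ) + Complex.I * (x.2 j : ℂ)

/-- The conjugate coordinate function `z̄ʲ = qʲ − i pʲ`. -/
noncomputable def zcbar {n : ℕ} (j : Fin n) : Phase n → ℂ :=
  fun x => (x.1 j : ℂ) - Complex.I * (x.2 j : ℂ)

/-- Replacing Wirtinger derivatives by the generalized derivatives `D = ∂ + ∂s` in the
complex Poisson bracket yields exactly the GSPB:
`2i ∑_j (Df/∂z̄ʲ DH/∂zʲ − Df/∂zʲ DH/∂z̄ʲ) = {f,H}_PB + f{s,H}_PB − H{s,f}_PB`. -/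
theorem generalized_bracket_eq_GSPB {n : ℕ} (f H s : Phase n → ℝ)
    (hf : ContDiff ℝ (⊤ : ℕ∞) f) (hH : ContDiff ℝ (⊤ : ℕ∞) H) (hs : ContDiff ℝ (⊤ : ℕ∞) s) (x : Phase n) :
    2 * Complex.I * ∑ j : Fin n,
        (Dzb (cR s) (cR f) j x * Dz (cR s) (cR H) j x -
          Dz (cR s) (cR f) j x * Dzb (cR s) (cR H) j x) =
      PBc (cR f) (cR H) x + (f x : ℂ) * PBc (cR s) (cR H) x
        - (H x : ℂ) * PBc (cR s) (cR f) x := by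
  simp only [PBc, Dz, Dzb, cR, Finset.mul_sum, ← Finset.sum_add_distrib,
    ← Finset.sum_sub_distrib]
  exact Finset.sum_congr rfl fun j _ => by ring
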